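/- For powers p₁, ..., p_K > 0, the outage constraint Pr(γ̃_k ≤ γ₀) ≤ p₀ (with 0 < p₀ < 1, squared channel gains unit-rate exponential) is equivalent to the inequality (1 - p₀) ∏_{j≠k} (1 + γ₀ p_j / p_k) ≤ 1. -/

import Mathlib

/-!
Put `a j = γ₀ p_j / p_k` and `Y = ∑_{j ≠ k} a j g_j`. Since the interference is almost surely
positive, outage is the event `g_k ≤ Y`. The variable `Y` is independent of `g_k ~ Exp(1)`, so
conditioning on `Y` gives `Pr(Y < g_k) = E[exp (-Y)]`, and by independence this Laplace transform
factorises as `∏_{j ≠ k} 1 / (1 + a j)`. Hence the outage probability is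
`1 - (∏_{j ≠ k} (1 + a j))⁻¹`, and the constraint rearranges to the product inequality.
-/

open MeasureTheory ProbabilityTheory Finset Real

lemma expMeasure_Iic {r : ℝ} (hr : 0 < r) (x : ℝ) :
    expMeasure r (Set.Iic x) = ENNReal.ofReal (if 0 ≤ x then 1 - exp (-(r * x)) else 0) := by
  rw [expMeasure, gammaMeasure, withDensity_apply _ measurableSet_Iic]
  exact lintegral_exponentialPDF_eq_antiDeriv hr x

lemma expMeasure_Ioi {r x : ℝ} (hr : 0 < r) (hx : 0 ≤ x) :
    expMeasure r (Set.Ioi x) = ENNReal.ofReal (exp (-(r * x))) := by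
  have := isProbabilityMeasure_expMeasure hr
  rw [← Set.compl_Iic, prob_compl_eq_one_sub measurableSet_Iic, expMeasure_Iic hr, if_pos hx,
    ENNReal.ofReal_sub _ (exp_pos _).le, ENNReal.ofReal_one,
    ENNReal.sub_sub_cancel ENNReal.one_ne_top]
  exact ENNReal.ofReal_le_one.2 (exp_le_one_iff.2 (by nlinarith))

lemma lintegral_exp_neg_mul_expMeasure {r a : ℝ} (hr : 0 < r) (ha : 0 ≤ a) :
    ∫⁻ x, ENNReal.ofReal (exp (-(a * x))) ∂expMeasure r = ENNReal.ofReal (r / (r + a)) := by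
  have hra : 0 < r + a := by linarith
  have hdensity : ∀ x, exponentialPDF r x * ENNReal.ofReal (exp (-(a * x)))
      = (Set.Ici 0).indicator (fun x => ENNReal.ofReal (r * exp (-(r + a) * x))) x := by
    intro x
    rcases lt_or_ge x 0 with hx | hx
    · simp [exponentialPDF_of_neg hx, Set.indicator_of_notMem (Set.notMem_Ici.2 hx)]
    · rw [exponentialPDF_of_nonneg hx, Set.indicator_of_mem (Set.mem_Ici.2 hx),
        ← ENNReal.ofReal_mul (by positivity), mul_assoc, ← exp_add]
      ring_nf
  have hint : IntegrableOn (fun x => r * exp (-(r + a) * x)) (Set.Ici 0) :=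
    (integrableOn_Ici_iff_integrableOn_Ioi).mpr ((exp_neg_integrableOn_Ioi 0 hra).const_mul r)
  change ∫⁻ x, _ ∂volume.withDensity (exponentialPDF r) = _
  rw [lintegral_withDensity_eq_lintegral_mul _
      (show Measurable (exponentialPDF r) from (measurable_exponentialPDFReal r).ennreal_ofReal)
      (by fun_prop)]
  simp only [Pi.mul_apply, hdensity]
  rw [lintegral_indicator measurableSet_Ici, ← ofReal_integral_eq_lintegral_ofReal hint
    (ae_of_all _ fun x => by positivity), integral_Ici_eq_integral_Ioi, integral_const_mul,
    integral_exp_mul_Ioi (by linarith) 0, mul_zero, exp_zero, neg_div_neg_eq, mul_one_div]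

section

variable {Ω ι : Type*} [MeasurableSpace Ω] {μ : Measure Ω}

lemma ae_pos_of_map_eq_expMeasure {X : Ω → ℝ} {r : ℝ} (hr : 0 < r) (hX : Measurable X)
    (hlaw : μ.map X = expMeasure r) :
    ∀ᵐ ω ∂μ, 0 < X ω := by
  refine ae_of_ae_map hX.aemeasurable ?_
  rw [hlaw, ae_iff]
  simpa [not_lt, ← Set.Iic_def] using expMeasure_Iic hr 0

lemma ProbabilityTheory.iIndepFun.indepFun_finsetSum_mul_of_notMem {g : ι → Ω → ℝ}
    (hindep : iIndepFun g μ) (hmeas : ∀ j, Measurable (g j)) (a : ι → ℝ) {s : Finset ι}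
    {i : ι} (hi : i ∉ s) :
    IndepFun (fun ω => ∑ j ∈ s, a j * g j ω) (g i) μ := by
  have h := (hindep.indepFun_finset s {i} (disjoint_singleton_right.2 hi) hmeas).comp
    (φ := fun v : s → ℝ => ∑ j : s, a j * v j)
    (ψ := fun v : ({i} : Finset ι) → ℝ => v ⟨i, mem_singleton_self i⟩) (by fun_prop)
    (_mγ' := inferInstance) (measurable_pi_apply _)
  convert h using 1
  · funext ω
    exact (sum_coe_sort s fun j => a j * g j ω).symm
  · rfl

lemma measure_lt_eq_lintegral_exp_of_indepFun [IsFiniteMeasure μ] {X Y : Ω → ℝ} {r : ℝ}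
    (hr : 0 < r) (hX : Measurable X) (hY : Measurable Y) (hindep : IndepFun Y X μ)
    (hlaw : μ.map X = expMeasure r) (hY_nonneg : 0 ≤ᵐ[μ] Y) :
    μ {ω | Y ω < X ω} = ∫⁻ ω, ENNReal.ofReal (exp (-(r * Y ω))) ∂μ := by
  have hlt : MeasurableSet {q : ℝ × ℝ | q.1 < q.2} :=
    measurableSet_lt measurable_fst measurable_snd
  have hY_nonneg' : ∀ᵐ y ∂μ.map Y, 0 ≤ y :=
    (ae_map_iff hY.aemeasurable measurableSet_Ici).2 hY_nonneg
  calc μ {ω | Y ω < X ω}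
      = μ.map (fun ω => (Y ω, X ω)) {q : ℝ × ℝ | q.1 < q.2} :=
        (Measure.map_apply (hY.prodMk hX) hlt).symm
    _ = ∫⁻ y, μ.map X (Set.Ioi y) ∂μ.map Y := by
        rw [(indepFun_iff_map_prod_eq_prod_map_map hY.aemeasurable hX.aemeasurable).1 hindep,
          Measure.prod_apply hlt]
        rfl
    _ = ∫⁻ y, ENNReal.ofReal (exp (-(r * y))) ∂μ.map Y := by
        refine lintegral_congr_ae ?_
        filter_upwards [hY_nonneg'] with y hy
        rw [hlaw, expMeasure_Ioi hr hy]
    _ = ∫⁻ ω, ENNReal.ofReal (exp (-(r * Y ω))) ∂μ := lintegral_map (by fun_prop) hY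

lemma lintegral_exp_neg_sum_of_iIndepFun {g : ι → Ω → ℝ} (hindep : iIndepFun g μ)
    (hmeas : ∀ j, Measurable (g j)) {r a : ι → ℝ} (s : Finset ι)
    (hr : ∀ j ∈ s, 0 < r j) (ha : ∀ j ∈ s, 0 ≤ a j)
    (hlaw : ∀ j ∈ s, μ.map (g j) = expMeasure (r j)) :
    ∫⁻ ω, ENNReal.ofReal (exp (-∑ j ∈ s, a j * g j ω)) ∂μ
      = ENNReal.ofReal (∏ j ∈ s, r j / (r j + a j)) := by
  have hfactor : ∀ ω, ENNReal.ofReal (exp (-∑ j ∈ s, a j * g j ω))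
      = ∏ j ∈ s, ENNReal.ofReal (exp (-(a j * g j ω))) := fun ω => by
    rw [← ENNReal.ofReal_prod_of_nonneg fun j _ => (exp_pos _).le, ← exp_sum, sum_neg_distrib]
  have hindep' : iIndepFun (fun j ω => ENNReal.ofReal (exp (-(a j * g j ω)))) μ :=
    hindep.comp (fun j x => ENNReal.ofReal (exp (-(a j * x)))) fun j => by fun_prop
  simp_rw [hfactor]
  rw [lintegral_prod_eq_prod_lintegral_of_indepFun s _ hindep' fun j => by fun_prop,
    ENNReal.ofReal_prod_of_nonneg fun j hj =>
      div_nonneg (hr j hj).le (by linarith [hr j hj, ha j hj])]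
  refine prod_congr rfl fun j hj => ?_
  rw [← lintegral_map (f := fun x => ENNReal.ofReal (exp (-(a j * x)))) (by fun_prop) (hmeas j),
    hlaw j hj, lintegral_exp_neg_mul_expMeasure (hr j hj) (ha j hj)]

end

lemma div_sum_mul_le_iff {ι : Type*} {s : Finset ι} {x c γ : ℝ} {y w : ι → ℝ} (hc : 0 < c)
    (hsum : 0 < ∑ j ∈ s, y j * w j) :
    x * c / ∑ j ∈ s, y j * w j ≤ γ ↔ x ≤ ∑ j ∈ s, γ * w j / c * y j := by
  rw [div_le_iff₀ hsum, ← le_div_iff₀ hc, mul_sum, sum_div]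
  exact iff_of_eq (congrArg _ (sum_congr rfl fun j _ => by ring))

lemma one_sub_ofReal_inv_le_ofReal_iff {x y : ℝ} (hx : 0 < x) (hy : 0 ≤ y) :
    1 - ENNReal.ofReal x⁻¹ ≤ ENNReal.ofReal y ↔ (1 - y) * x ≤ 1 := by
  rw [← ENNReal.ofReal_one, ← ENNReal.ofReal_sub _ (inv_nonneg.2 hx.le),
    ENNReal.ofReal_le_ofReal_iff hy, sub_le_comm, inv_eq_one_div, le_div_iff₀ hx]

theorem outage_constraint_equiv_general
    {Ω : Type*} [MeasurableSpace Ω] (μ : Measure Ω) [IsProbabilityMeasure μ]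
    (K : ℕ) (hK : 2 ≤ K) (k : Fin K) (g : Fin K → Ω → ℝ) (p : Fin K → ℝ)
    (γ₀ p₀ : ℝ) (hp : ∀ j, 0 < p j) (hγ₀ : 0 < γ₀) (hp₀ : 0 < p₀)
    (hmeas : ∀ j, Measurable (g j))
    (hdist : ∀ j, μ.map (g j) = expMeasure 1)
    (hindep : iIndepFun g μ) :
    μ {ω | g k ω * p k / (∑ j ∈ univ \ {k}, g j ω * p j) ≤ γ₀} ≤ ENNReal.ofReal p₀
      ↔ (1 - p₀) * ∏ j ∈ univ \ {k}, (1 + γ₀ * p j / p k) ≤ 1 := by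
  set S : Finset (Fin K) := univ \ {k}
  set a : Fin K → ℝ := fun j => γ₀ * p j / p k
  set Y : Ω → ℝ := fun ω => ∑ j ∈ S, a j * g j ω
  have hkS : k ∉ S := by simp [S]
  have hS : S.Nonempty := card_pos.1 (by simp [S, card_univ_sdiff]; omega)
  have ha : ∀ j, 0 ≤ a j := fun j => by have := hp j; have := hp k; positivity
  have hY : Measurable Y := by fun_prop
  have hg_pos : ∀ᵐ ω ∂μ, ∀ j, 0 < g j ω :=
    ae_all_iff.2 fun j => ae_pos_of_map_eq_expMeasure one_pos (hmeas j) (hdist j)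
  have hevent : ({ω | g k ω * p k / ∑ j ∈ S, g j ω * p j ≤ γ₀} : Set Ω)
      =ᵐ[μ] ({ω | Y ω < g k ω}ᶜ : Set Ω) := by
    refine Filter.eventuallyEq_set.2 ?_
    filter_upwards [hg_pos] with ω hω
    exact (div_sum_mul_le_iff (hp k) (sum_pos (fun j _ => mul_pos (hω j) (hp j)) hS)).trans
      not_lt.symm
  have hno_outage : μ {ω | Y ω < g k ω} = ENNReal.ofReal (∏ j ∈ S, (1 + a j))⁻¹ := by
    rw [measure_lt_eq_lintegral_exp_of_indepFun one_pos (hmeas k) hY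
      (hindep.indepFun_finsetSum_mul_of_notMem hmeas a hkS) (hdist k)
      (hg_pos.mono fun ω hω => sum_nonneg fun j _ => mul_nonneg (ha j) (hω j).le)]
    simp only [one_mul, Y]
    rw [lintegral_exp_neg_sum_of_iIndepFun hindep hmeas S (r := fun _ => 1)
      (fun _ _ => one_pos) (fun j _ => ha j) (fun j _ => hdist j)]
    simp only [one_div, prod_inv_distrib]
  rw [measure_congr hevent, prob_compl_eq_one_sub (measurableSet_lt hY (hmeas k)), hno_outage,
    one_sub_ofReal_inv_le_ofReal_iff (prod_pos fun j _ => by linarith [ha j]) hp₀.le]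

/-- For positive powers, the probabilistic outage constraint `Pr(γ̃_k ≤ γ₀) ≤ p₀`
(interference-limited SINR, i.i.d. unit-rate exponential squared channel gains)
is equivalent to `(1 - p₀) ∏_{j ≠ k} (1 + γ₀ p j / p k) ≤ 1`. -/
theorem outage_constraint_equiv
    {Ω : Type*} [MeasurableSpace Ω] (μ : Measure Ω) [IsProbabilityMeasure μ]
    (K : ℕ) (hK : 2 ≤ K) (k : Fin K) (g : Fin K → Ω → ℝ) (p : Fin K → ℝ)
    (γ₀ p₀ : ℝ) (hp : ∀ j, 0 < p j) (hγ₀ : 0 < γ₀) (hp₀ : 0 < p₀) (hp₀' : p₀ < 1)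
    (hmeas : ∀ j, Measurable (g j))
    (hdist : ∀ j, μ.map (g j) = expMeasure 1)
    (hindep : iIndepFun g μ) :
    μ {ω | g k ω * p k / (∑ j ∈ univ \ {k}, g j ω * p j) ≤ γ₀} ≤ ENNReal.ofReal p₀
      ↔ (1 - p₀) * ∏ j ∈ univ \ {k}, (1 + γ₀ * p j / p k) ≤ 1 :=
  outage_constraint_equiv_general μ K hK k g p γ₀ p₀ hp hγ₀ hp₀ hmeas hdist hindep
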